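/- For every n ≥ 2, the inequality 1 − ∑_{i∈[n]} z_i ≥ 0 has a Lasserre derivation of rank 2 from the set of inequalities {1 − z_i − z_j ≥ 0 : i,j∈[n], i ≠ j}. -/

import Mathlib

/-! The certificate is
`1 - ∑ zᵢ = (1 - ∑ zᵢ)² + ∑ᵢ (zᵢ - zᵢ²) + ∑_{i ≠ j} (-zᵢ zⱼ)`,
where for `i ≠ j` the term `-zᵢ zⱼ = zᵢ (1 - zᵢ - zⱼ) + (zᵢ² - zᵢ)` is a hypothesis multiplied by
`zᵢ` plus a Boolean axiom, all of degree `2`. Since concatenating derivations adds the derived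
polynomials, the polynomials with a rank-`d` derivation form an additive submonoid, and it
suffices to derive each summand separately. -/

namespace NarrowProofs

open MvPolynomial

/-- A clause is a finite set of literals; a literal is a variable together with a
sign (`true` = positive literal, `false` = negative literal). -/
abbrev Clause (V : Type) := Finset (V × Bool)

/-- Twin-variable alphabet: `(v, false)` is the variable `v` itself and
`(v, true)` is its twin `v̄` (intended value `1 − v`). -/
abbrev PV (V : Type) := V × Bool

/-- The expansion of one term of a Sherali-Adams style derivation:
`∏_{i∈I} x_i · ∏_{j∈J} (1−x_j) · p`. -/
noncomputable def expandTerm {σ : Type} (I J : Finset σ) (p : MvPolynomial σ ℝ) :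
    MvPolynomial σ ℝ :=
  (∏ i ∈ I, X i) * (∏ j ∈ J, (1 - X j)) * p

/-- A Sherali-Adams style derivation of the inequality `r ≥ 0`, where each
`p_t` must come from the allowed set `Ax`: a formula
`∑_t α_t · ∏_{i∈I_t} x_i · ∏_{j∈J_t} (1−x_j) · p_t` with `α_t ≥ 0` that
expands to the polynomial `r`. -/
structure SAStyleDeriv (σ : Type) (Ax : Set (MvPolynomial σ ℝ))
    (r : MvPolynomial σ ℝ) where
  len : ℕ
  α : Fin len → ℝ
  I : Fin len → Finset σ
  J : Fin len → Finset σ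
  p : Fin len → MvPolynomial σ ℝ
  alpha_nonneg : ∀ t, 0 ≤ α t
  p_mem : ∀ t, p t ∈ Ax
  sums : ∑ t, α t • expandTerm (I t) (J t) (p t) = r

/-- The rank of the derivation is at most `d`: every expanded term has total
degree at most `d`. -/
def SAStyleDeriv.rankLE {σ : Type} {Ax : Set (MvPolynomial σ ℝ)}
    {r : MvPolynomial σ ℝ} (der : SAStyleDeriv σ Ax r) (d : ℕ) : Prop :=
  ∀ t, (expandTerm (der.I t) (der.J t) (der.p t)).totalDegree ≤ d

/-- The size of the derivation: the total number of terms of the expanded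
polynomials. -/
noncomputable def SAStyleDeriv.size {σ : Type} {Ax : Set (MvPolynomial σ ℝ)}
    {r : MvPolynomial σ ℝ} (der : SAStyleDeriv σ Ax r) : ℕ :=
  ∑ t, (expandTerm (der.I t) (der.J t) (der.p t)).support.card

/-- Boolean axioms `x²−x` and `x−x²`. -/
def boolAxioms (σ : Type) : Set (MvPolynomial σ ℝ) :=
  {p | ∃ x : σ, p = X x ^ 2 - X x ∨ p = X x - X x ^ 2}

/-- The polynomials allowed in a Sherali-Adams derivation from hypotheses `Q`:
a hypothesis, a Boolean axiom, or the constant 1. -/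
def SAAxioms (σ : Type) (Q : Set (MvPolynomial σ ℝ)) : Set (MvPolynomial σ ℝ) :=
  Q ∪ boolAxioms σ ∪ {1}

/-- The polynomials allowed in a Lasserre derivation from hypotheses `Q`:
a hypothesis, a Boolean axiom, the constant 1, or the square of an arbitrary
polynomial. -/
def LasAxioms (σ : Type) (Q : Set (MvPolynomial σ ℝ)) : Set (MvPolynomial σ ℝ) :=
  SAAxioms σ Q ∪ {p | ∃ q : MvPolynomial σ ℝ, p = q ^ 2}

theorem _root_.Finset.sq_sum_eq_sum_sq_add_sum_offDiag {ι R : Type*} [CommSemiring R]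
    [DecidableEq ι] (s : Finset ι) (f : ι → R) :
    (∑ i ∈ s, f i) ^ 2 = ∑ i ∈ s, f i ^ 2 + ∑ q ∈ s.offDiag, f q.1 * f q.2 := by
  rw [sq, Finset.sum_mul_sum, ← Finset.sum_product', ← Finset.diag_union_offDiag,
    Finset.sum_union (Finset.disjoint_diag_offDiag _), Finset.sum_diag]
  simp only [sq]

namespace SAStyleDeriv

variable {σ : Type} {Ax : Set (MvPolynomial σ ℝ)}

def empty : SAStyleDeriv σ Ax 0 where
  len := 0
  α := Fin.elim0
  I := Fin.elim0
  J := Fin.elim0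
  p := Fin.elim0
  alpha_nonneg := fun t => t.elim0
  p_mem := fun t => t.elim0
  sums := by simp

def single (I J : Finset σ) {p : MvPolynomial σ ℝ} (hp : p ∈ Ax) :
    SAStyleDeriv σ Ax (expandTerm I J p) where
  len := 1
  α := fun _ => 1
  I := fun _ => I
  J := fun _ => J
  p := fun _ => p
  alpha_nonneg := fun _ => zero_le_one
  p_mem := fun _ => hp
  sums := by simp

def append {r s : MvPolynomial σ ℝ} (d₁ : SAStyleDeriv σ Ax r) (d₂ : SAStyleDeriv σ Ax s) :
    SAStyleDeriv σ Ax (r + s) where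
  len := d₁.len + d₂.len
  α := Fin.append d₁.α d₂.α
  I := Fin.append d₁.I d₂.I
  J := Fin.append d₁.J d₂.J
  p := Fin.append d₁.p d₂.p
  alpha_nonneg := Fin.addCases (by simpa using d₁.alpha_nonneg) (by simpa using d₂.alpha_nonneg)
  p_mem := Fin.addCases (by simpa using d₁.p_mem) (by simpa using d₂.p_mem)
  sums := by simp [Fin.sum_univ_add, d₁.sums, d₂.sums]

theorem rankLE_append {r s : MvPolynomial σ ℝ} {d₁ : SAStyleDeriv σ Ax r}
    {d₂ : SAStyleDeriv σ Ax s} {d : ℕ} (h₁ : d₁.rankLE d) (h₂ : d₂.rankLE d) :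
    (d₁.append d₂).rankLE d :=
  Fin.addCases (fun t => by simpa [append] using h₁ t) (fun t => by simpa [append] using h₂ t)

end SAStyleDeriv

def derivableAtRank (σ : Type) (Ax : Set (MvPolynomial σ ℝ)) (d : ℕ) :
    AddSubmonoid (MvPolynomial σ ℝ) where
  carrier := {r | ∃ der : SAStyleDeriv σ Ax r, der.rankLE d}
  zero_mem' := ⟨.empty, fun t => t.elim0⟩
  add_mem' := fun ⟨d₁, h₁⟩ ⟨d₂, h₂⟩ => ⟨d₁.append d₂, SAStyleDeriv.rankLE_append h₁ h₂⟩

section derivableAtRank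

variable {σ : Type} {Ax : Set (MvPolynomial σ ℝ)} {d : ℕ}

theorem expandTerm_mem_derivableAtRank {I J : Finset σ} {p : MvPolynomial σ ℝ} (hp : p ∈ Ax)
    (hd : (expandTerm I J p).totalDegree ≤ d) : expandTerm I J p ∈ derivableAtRank σ Ax d :=
  ⟨.single I J hp, fun _ => hd⟩

theorem mem_derivableAtRank_of_mem {p : MvPolynomial σ ℝ} (hp : p ∈ Ax) (hd : p.totalDegree ≤ d) :
    p ∈ derivableAtRank σ Ax d := by
  simpa [expandTerm] using
    expandTerm_mem_derivableAtRank (I := ∅) (J := ∅) hp (by simpa [expandTerm] using hd)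

theorem X_mul_mem_derivableAtRank {p : MvPolynomial σ ℝ} (hp : p ∈ Ax) (i : σ)
    (hd : (X i * p).totalDegree ≤ d) : X i * p ∈ derivableAtRank σ Ax d := by
  simpa [expandTerm] using
    expandTerm_mem_derivableAtRank (I := {i}) (J := ∅) hp (by simpa [expandTerm] using hd)

end derivableAtRank

section LasAxioms

variable {σ : Type} {Q : Set (MvPolynomial σ ℝ)}

theorem mem_lasAxioms_of_mem {q : MvPolynomial σ ℝ} (hq : q ∈ Q) : q ∈ LasAxioms σ Q :=
  Or.inl (Or.inl (Or.inl hq))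

theorem sq_mem_lasAxioms (q : MvPolynomial σ ℝ) : q ^ 2 ∈ LasAxioms σ Q :=
  Or.inr ⟨q, rfl⟩

theorem X_sq_sub_X_mem_lasAxioms (i : σ) : X i ^ 2 - X i ∈ LasAxioms σ Q :=
  Or.inl (Or.inl (Or.inr ⟨i, Or.inl rfl⟩))

theorem X_sub_X_sq_mem_lasAxioms (i : σ) : X i - X i ^ 2 ∈ LasAxioms σ Q :=
  Or.inl (Or.inl (Or.inr ⟨i, Or.inr rfl⟩))

end LasAxioms

section Degree

variable {σ : Type}

theorem totalDegree_X_sq_le (i : σ) : (X i ^ 2 : MvPolynomial σ ℝ).totalDegree ≤ 2 :=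
  (totalDegree_pow _ _).trans (by rw [totalDegree_X])

theorem totalDegree_X_sq_sub_X_le (i : σ) : (X i ^ 2 - X i : MvPolynomial σ ℝ).totalDegree ≤ 2 :=
  (totalDegree_sub _ _).trans (max_le (totalDegree_X_sq_le i) (by simp [totalDegree_X]))

theorem totalDegree_X_sub_X_sq_le (i : σ) : (X i - X i ^ 2 : MvPolynomial σ ℝ).totalDegree ≤ 2 :=
  (totalDegree_sub _ _).trans (max_le (by simp [totalDegree_X]) (totalDegree_X_sq_le i))

theorem totalDegree_one_sub_sum_X_le (s : Finset σ) :
    (1 - ∑ i ∈ s, X i : MvPolynomial σ ℝ).totalDegree ≤ 1 :=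
  (totalDegree_sub _ _).trans <| max_le (by simp) <|
    (totalDegree_finsetSum _ _).trans <| Finset.sup_le fun i _ => (totalDegree_X i).le

theorem totalDegree_X_mul_one_sub_X_sub_X_le (i j : σ) :
    (X i * (1 - X i - X j) : MvPolynomial σ ℝ).totalDegree ≤ 2 := by
  have h : (1 - X i - X j : MvPolynomial σ ℝ).totalDegree ≤ 1 :=
    (totalDegree_sub _ _).trans <| max_le
      ((totalDegree_sub _ _).trans (max_le (by simp) (totalDegree_X i).le)) (totalDegree_X j).le
  exact (totalDegree_mul _ _).trans (by rw [totalDegree_X]; omega)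

end Degree

def pairSumBounds (σ : Type) : Set (MvPolynomial σ ℝ) :=
  {p | ∃ i j : σ, i ≠ j ∧ p = 1 - X i - X j}

section pairSumBounds

variable {σ : Type}

theorem neg_X_mul_X_mem_derivableAtRank {i j : σ} (hij : i ≠ j) :
    -(X i * X j : MvPolynomial σ ℝ) ∈ derivableAtRank σ (LasAxioms σ (pairSumBounds σ)) 2 := by
  rw [show -(X i * X j : MvPolynomial σ ℝ) = X i * (1 - X i - X j) + (X i ^ 2 - X i) by ring]
  exact add_mem
    (X_mul_mem_derivableAtRank (mem_lasAxioms_of_mem (Q := pairSumBounds σ) ⟨i, j, hij, rfl⟩) i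
      (totalDegree_X_mul_one_sub_X_sub_X_le i j))
    (mem_derivableAtRank_of_mem (X_sq_sub_X_mem_lasAxioms i) (totalDegree_X_sq_sub_X_le i))

theorem one_sub_sum_X_mem_derivableAtRank [DecidableEq σ] (s : Finset σ) :
    (1 - ∑ i ∈ s, X i : MvPolynomial σ ℝ) ∈
      derivableAtRank σ (LasAxioms σ (pairSumBounds σ)) 2 := by
  have key : (1 - ∑ i ∈ s, X i : MvPolynomial σ ℝ) =
      (1 - ∑ i ∈ s, X i) ^ 2 + ∑ i ∈ s, (X i - X i ^ 2) + ∑ q ∈ s.offDiag, -(X q.1 * X q.2) := by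
    rw [Finset.sum_neg_distrib, Finset.sum_sub_distrib]
    linear_combination
      (-1 : MvPolynomial σ ℝ) * Finset.sq_sum_eq_sum_sq_add_sum_offDiag s (X (R := ℝ))
  rw [key]
  refine add_mem (add_mem ?_ ?_) ?_
  · exact mem_derivableAtRank_of_mem (sq_mem_lasAxioms _)
      ((totalDegree_pow _ _).trans (by grw [totalDegree_one_sub_sum_X_le]))
  · exact sum_mem fun i _ =>
      mem_derivableAtRank_of_mem (X_sub_X_sq_mem_lasAxioms i) (totalDegree_X_sub_X_sq_le i)
  · exact sum_mem fun q hq => neg_X_mul_X_mem_derivableAtRank (Finset.mem_offDiag.1 hq).2.2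

end pairSumBounds

theorem lasserre_rank_two_sum_general (n : ℕ) :
    ∃ d : SAStyleDeriv (Fin n)
        (LasAxioms (Fin n) {p | ∃ i j : Fin n, i ≠ j ∧ p = 1 - X i - X j})
        (1 - ∑ i : Fin n, X i),
      d.rankLE 2 :=
  one_sub_sum_X_mem_derivableAtRank Finset.univ

/-- for every `n ≥ 2`, the inequality `1 − ∑_{i∈[n]} z_i ≥ 0`
has a Lasserre derivation of rank 2 from the set of inequalities
`{1 − z_i − z_j ≥ 0 : i,j ∈ [n], i ≠ j}`. -/
theorem lasserre_rank_two_sum (n : ℕ) (hn : 2 ≤ n) :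
    ∃ d : SAStyleDeriv (Fin n)
        (LasAxioms (Fin n) {p | ∃ i j : Fin n, i ≠ j ∧ p = 1 - X i - X j})
        (1 - ∑ i : Fin n, X i),
      d.rankLE 2 :=
  lasserre_rank_two_sum_general n

end NarrowProofs
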